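/- The average path length of the graph G_t satisfies lim_{t→∞} D̄(t)/t = 4/9. -/

import Mathlib

open Filter Finset

/-- A letter of the alphabet `{1,2,3}`. -/
abbrev Letter := Fin 3

/-- A word: a finite (possibly empty) sequence of letters. -/
abbrev Word := List Letter

/-- Adjacency of two words: `σ ≠ τ`, and writing `σ = β ++ σ'`, `τ = β ++ τ'` with `β`
the longest common prefix, either one of `σ'`, `τ'` is empty and the other uses at most two
distinct letters, or `σ' = i j^k` and `τ' = j i^{k'}` for distinct letters `i ≠ j`. -/
def WordAdj (σ τ : Word) : Prop :=
  σ ≠ τ ∧ ∃ β σ' τ' : Word,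
    σ = β ++ σ' ∧ τ = β ++ τ' ∧
    ((σ' = [] ∧ τ'.toFinset.card ≤ 2) ∨
     (τ' = [] ∧ σ'.toFinset.card ≤ 2) ∨
     (∃ (i j : Letter) (k k' : ℕ), i ≠ j ∧
        σ' = i :: List.replicate k j ∧ τ' = j :: List.replicate k' i))

/-- The graph `G_t`: vertices are the words of length at most `t` (all other words are
isolated), with adjacency `WordAdj`. -/
def Gt (t : ℕ) : SimpleGraph Word where
  Adj σ τ := σ.length ≤ t ∧ τ.length ≤ t ∧ WordAdj σ τ
  symm := ⟨by
    rintro σ τ ⟨h1, h2, hne, β, σ', τ', e1, e2, h3⟩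
    refine ⟨h2, h1, hne.symm, β, τ', σ', e2, e1, ?_⟩
    rcases h3 with h | h | ⟨i, j, k, k', hij, hs, ht⟩
    · exact Or.inr (Or.inl h)
    · exact Or.inl h
    · exact Or.inr (Or.inr ⟨j, i, k', k, hij.symm, ht, hs⟩)⟩
  loopless := ⟨fun σ h => h.2.2.1 rfl⟩

/-- `dW t σ τ` is the geodesic distance `d_t(σ,τ)` in the graph `G_t`. -/
noncomputable def dW (t : ℕ) (σ τ : Word) : ℕ := (Gt t).dist σ τ

/-- Length of the longest suffix of `σ` using at most two distinct letters. -/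
def suffLen (σ : Word) : ℕ :=
  Nat.findGreatest (fun m => (σ.drop (σ.length - m)).toFinset.card ≤ 2) σ.length

/-- `fW σ = τ₂` where `σ = τ₂τ₁` and `τ₁` is the longest suffix of `σ` using at most two
distinct letters; `fW [] = []`. -/
def fW (σ : Word) : Word := σ.take (σ.length - suffLen σ)

/-- `ω(σ)`: the least `n ≥ 0` with `f^[n] σ = ∅`. -/
noncomputable def omegaW (σ : Word) : ℕ := sInf {n : ℕ | fW^[n] σ = []}

/-- `L(σ) = d_{|σ|}(σ, ∅) - 1` for nonempty `σ`, and `L(∅) = 0`. -/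
noncomputable def Lw (σ : Word) : ℕ := if σ = [] then 0 else dW σ.length σ [] - 1

/-- `ᾱ_m`: the average of `L` over the `3^m` words of length `m`. -/
noncomputable def alphaBar (m : ℕ) : ℝ :=
  (∑ v : Fin m → Letter, (Lw (List.ofFn v) : ℝ)) / 3 ^ m

/-- `α* = sup_{m ≥ 1} ᾱ_m / m`. -/
noncomputable def alphaStar : ℝ :=
  sSup {x : ℝ | ∃ m : ℕ, 1 ≤ m ∧ x = alphaBar m / m}

/-- `#V_t = (3^{t+1} - 1)/2`, the number of vertices of `G_t`, as a real number. -/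
noncomputable def Nv (t : ℕ) : ℝ := ((3 : ℝ) ^ (t + 1) - 1) / 2

/-- The sum of `d_t(σ,τ)` over all ordered pairs of words `σ, τ ∈ V_t`
(twice the sum over unordered pairs of distinct words). -/
noncomputable def pairSum (t : ℕ) : ℝ :=
  ∑ k ∈ range (t + 1), ∑ l ∈ range (t + 1),
    ∑ v : Fin k → Letter, ∑ w : Fin l → Letter,
      (dW t (List.ofFn v) (List.ofFn w) : ℝ)

/-- The average path length `D̄(t)` of `G_t`. -/
noncomputable def Dbar (t : ℕ) : ℝ := pairSum t / (Nv t * (Nv t - 1))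

/-- `κ_t = (Σ_{σ ∈ V_t} L(σ)) / #V_t`. -/
noncomputable def kappa (t : ℕ) : ℝ :=
  (∑ k ∈ range (t + 1), ∑ v : Fin k → Letter, (Lw (List.ofFn v) : ℝ)) / Nv t

/-- `π_t`: the sum of `d_t(σ,τ)` over unordered pairs of distinct `σ, τ ∈ V_t`. -/
noncomputable def piT (t : ℕ) : ℝ := pairSum t / 2

/-- `μ_t`: the sum of `d_t(σ,τ)` over unordered pairs of distinct `σ, τ ∈ V_t`
having the same first letter. -/
noncomputable def muT (t : ℕ) : ℝ :=
  (∑ i : Letter, ∑ k ∈ range t, ∑ l ∈ range t,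
    ∑ v : Fin k → Letter, ∑ w : Fin l → Letter,
      (dW t (i :: List.ofFn v) (i :: List.ofFn w) : ℝ)) / 2

/-- `λ_t = Σ_{σ ∈ V_t, σ ≠ ∅} d_t(σ, ∅)`. -/
noncomputable def lambdaT (t : ℕ) : ℝ :=
  ∑ k ∈ Finset.Icc 1 t, ∑ v : Fin k → Letter, (dW t (List.ofFn v) [] : ℝ)

/-- `ν_t = Σ_{i<j} Σ_{|σ'|,|τ'| ≤ t-1} d_t(iσ', jτ')`. -/
noncomputable def nuT (t : ℕ) : ℝ :=
  ∑ i : Letter, ∑ j : Letter,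
    if i < j then
      ∑ k ∈ range t, ∑ l ∈ range t,
        ∑ v : Fin k → Letter, ∑ w : Fin l → Letter,
          (dW t (i :: List.ofFn v) (j :: List.ofFn w) : ℝ)
    else 0

/-- `IsNormalDecomp σ τs`: `τs = [τ₁, …, τ_l]` (with `l ≥ 1`) is a normal decomposition
of `σ`: `σ = τ₁⋯τ_l`; `#τ₁ ≤ 2`, `|τ₁| ≥ 1`; `#τ_i = 2`, `|τ_i| ≥ 2` for `i ≥ 2`; and for
`i < l` the last letter of `τ_i` is the unique letter of the alphabet not appearing
in `τ_{i+1}`. -/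
def IsNormalDecomp (σ : Word) (τs : List Word) : Prop :=
  σ = τs.flatten ∧ τs ≠ [] ∧
  (∀ i : Fin τs.length,
    (i.1 = 0 → 1 ≤ (τs.get i).length ∧ (τs.get i).toFinset.card ≤ 2) ∧
    (1 ≤ i.1 → 2 ≤ (τs.get i).length ∧ (τs.get i).toFinset.card = 2)) ∧
  (∀ i : ℕ, ∀ h : i + 1 < τs.length,
    ∃ c : Letter, (τs.get ⟨i, Nat.lt_of_succ_lt h⟩).getLast? = some c ∧
      c ∉ (τs.get ⟨i + 1, h⟩).toFinset ∧
      ∀ c' : Letter, c' ∉ (τs.get ⟨i + 1, h⟩).toFinset → c' = c)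

/-- `W_{k₁⋯k_l}`: the number of words of length `k₁ + ⋯ + k_l` admitting a normal
decomposition into blocks of lengths `k₁, …, k_l`. -/
noncomputable def Wcount (ks : List ℕ) : ℕ :=
  Nat.card {σ : Word // ∃ τs : List Word, IsNormalDecomp σ τs ∧ τs.map List.length = ks}

/-- `Ē(t) = 3^{-t} Σ_{q ≥ 1} Σ_{k₁ ≥ 1, k₂,…,k_q ≥ 2, k₁+⋯+k_q = t} (q-1)·W_{k₁⋯k_q}`. -/
noncomputable def Ebar (t : ℕ) : ℝ :=
  ((∑ c : Composition t,
      if ∀ i ∈ c.blocks.tail, 2 ≤ i then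
        (c.blocks.length - 1) * Wcount c.blocks
      else 0 : ℕ) : ℝ) / 3 ^ t


/-!
Let `ω(σ)` be the number of blocks in the greedy decomposition of `σ`, read from the right, into
blocks with at most two distinct letters. Deleting the last block is an edge, so
`d_t(σ, τ) ≤ ω(σ) + ω(τ)`. Conversely, for fixed `τ` the potential
`ω(x') + ω(τ') + [x is a prefix of τ]`, where `x'` and `τ'` are what is left of `x` and `τ` after
their common prefix, equals `1` at `τ` and changes by at most one along an edge; this gives
`ω(σ) + ω(τ) ≤ d_t(σ, τ) + 2 |lcp(σ, τ)| + 1`. Common prefixes have bounded average length, so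
`D̄(t) = 2 Σ_{σ ∈ V_t} ω(σ) / #V_t + O(1)`. Prepending a letter opens a new block exactly when the
leftmost block has two letters and the new letter is the third one; hence
`Σ_{σ ∈ V_t} ω(σ) = (t + 2) 3^(t-1)` and `|D̄(t) - 4t/9| ≤ 2`.
-/

namespace WordGraph

open SimpleGraph

section CommonPrefix

variable {α : Type*} [DecidableEq α]

def commonPrefix : List α → List α → List α
  | x :: u, y :: v => if x = y then x :: commonPrefix u v else []
  | _, _ => []

@[simp] lemma commonPrefix_nil_left (v : List α) : commonPrefix [] v = [] := by cases v <;> rfl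

@[simp] lemma commonPrefix_nil_right (u : List α) : commonPrefix u [] = [] := by cases u <;> rfl

lemma commonPrefix_cons (x y : α) (u v : List α) :
    commonPrefix (x :: u) (y :: v) = if x = y then x :: commonPrefix u v else [] := rfl

lemma commonPrefix_prefix_left (u v : List α) : commonPrefix u v <+: u := by
  induction u generalizing v with
  | nil => simp
  | cons x u ih =>
    cases v with
    | nil => simp
    | cons y v =>
      rw [commonPrefix_cons]
      split_ifs
      · exact List.cons_prefix_cons.mpr ⟨rfl, ih v⟩
      · exact List.nil_prefix

lemma commonPrefix_comm (u v : List α) : commonPrefix u v = commonPrefix v u := by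
  induction u generalizing v with
  | nil => simp
  | cons x u ih =>
    cases v with
    | nil => simp
    | cons y v =>
      rw [commonPrefix_cons, commonPrefix_cons, ih]
      split_ifs <;> simp_all

lemma commonPrefix_prefix_right (u v : List α) : commonPrefix u v <+: v :=
  commonPrefix_comm u v ▸ commonPrefix_prefix_left v u

lemma commonPrefix_append_append (β u v : List α) :
    commonPrefix (β ++ u) (β ++ v) = β ++ commonPrefix u v := by
  induction β with
  | nil => rfl
  | cons x β ih => simp [commonPrefix_cons, ih]

lemma commonPrefix_eq_left {u v : List α} (h : u <+: v) : commonPrefix u v = u := by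
  obtain ⟨r, rfl⟩ := h
  simpa using commonPrefix_append_append u [] r

lemma commonPrefix_self (u : List α) : commonPrefix u u = u :=
  commonPrefix_eq_left (List.prefix_refl u)

lemma exists_eq_commonPrefix_append (u v : List α) :
    ∃ u' v', u = commonPrefix u v ++ u' ∧ v = commonPrefix u v ++ v' ∧ commonPrefix u' v' = [] := by
  obtain ⟨u', hu⟩ := commonPrefix_prefix_left u v
  obtain ⟨v', hv⟩ := commonPrefix_prefix_right u v
  refine ⟨u', v', hu.symm, hv.symm, ?_⟩
  have h := commonPrefix_append_append (commonPrefix u v) u' v'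
  rw [hu, hv] at h
  simpa using h.symm

lemma card_toFinset_le_of_subset {u v : List α} (h : u ⊆ v) : u.toFinset.card ≤ v.toFinset.card :=
  Finset.card_le_card fun _ ha => List.mem_toFinset.2 (h (List.mem_toFinset.1 ha))

lemma commonPrefix_append_eq_nil {β τ : List α} (X : List α) (hβ : β ≠ [])
    (h : commonPrefix β τ = []) : commonPrefix (β ++ X) τ = [] := by
  obtain ⟨b, β, rfl⟩ := List.exists_cons_of_ne_nil hβ
  cases τ with
  | nil => simp
  | cons c τ =>
    rw [commonPrefix_cons] at h
    rw [List.cons_append, commonPrefix_cons]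
    split_ifs at h ⊢
    rfl

end CommonPrefix

lemma sum_ofFn_succ {α M : Type*} [Fintype α] [AddCommMonoid M] {m : ℕ} (f : List α → M) :
    ∑ v : Fin (m + 1) → α, f (List.ofFn v) = ∑ x : α, ∑ v : Fin m → α, f (x :: List.ofFn v) := by
  rw [← (Fin.consEquiv fun _ => α).sum_comp, Fintype.sum_prod_type]
  simp [Fin.consEquiv]

lemma sum_sum_add_eq {ι R : Type*} [CommSemiring R] (s : Finset ι) (f : ι → R) :
    ∑ i ∈ s, ∑ j ∈ s, (f i + f j) = 2 * #s * ∑ i ∈ s, f i := by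
  simp only [sum_add_distrib, sum_const, nsmul_eq_mul, ← mul_sum]
  ring

/-- Greedy parse, from the right, into blocks with at most two distinct letters: the state is
the letter set of the current block and the number of cuts made so far. -/
def parseStep (c : Letter) (p : Finset Letter × ℕ) : Finset Letter × ℕ :=
  if (insert c p.1).card ≤ 2 then (insert c p.1, p.2) else ({c}, p.2 + 1)

def parse (σ : Word) (p : Finset Letter × ℕ) : Finset Letter × ℕ := σ.foldr parseStep p

def headLetters (σ : Word) : Finset Letter := (parse σ (∅, 0)).1

def cuts (σ : Word) : ℕ := (parse σ (∅, 0)).2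

def blockCount (σ : Word) : ℕ := if σ = [] then 0 else cuts σ + 1

lemma parse_append (u v : Word) (p : Finset Letter × ℕ) :
    parse (u ++ v) p = parse u (parse v p) := List.foldr_append

def LagsBy (k : ℕ) (p q : Finset Letter × ℕ) : Prop :=
  (q.2 = p.2 + k ∧ p.1 ⊆ q.1) ∨ (q.2 = p.2 + k + 1 ∧ q.1 ⊆ p.1)

lemma LagsBy.parseStep {k : ℕ} {p q : Finset Letter × ℕ} (c : Letter) (h : LagsBy k p q) :
    LagsBy k (parseStep c p) (parseStep c q) := by
  have hmono {S T : Finset Letter} (hST : S ⊆ T) (hT : (insert c T).card ≤ 2) :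
      (insert c S).card ≤ 2 :=
    (Finset.card_le_card (Finset.insert_subset_insert c hST)).trans hT
  unfold WordGraph.parseStep
  rcases h with ⟨hn, hsub⟩ | ⟨hn, hsub⟩
  · by_cases hq : (insert c q.1).card ≤ 2
    · simp only [hq, hmono hsub hq, if_true]
      exact .inl ⟨hn, Finset.insert_subset_insert c hsub⟩
    · by_cases hp : (insert c p.1).card ≤ 2
      · simp only [hp, hq, if_true, if_false]
        exact .inr ⟨by omega, by simp⟩
      · simp only [hp, hq, if_false]
        exact .inl ⟨by omega, subset_rfl⟩
  · by_cases hp : (insert c p.1).card ≤ 2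
    · simp only [hp, hmono hsub hp, if_true]
      exact .inr ⟨hn, Finset.insert_subset_insert c hsub⟩
    · by_cases hq : (insert c q.1).card ≤ 2
      · simp only [hp, hq, if_true, if_false]
        exact .inl ⟨by omega, by simp⟩
      · simp only [hp, hq, if_false]
        exact .inr ⟨by omega, subset_rfl⟩

lemma LagsBy.parse {k : ℕ} {p q : Finset Letter × ℕ} (σ : Word) (h : LagsBy k p q) :
    LagsBy k (parse σ p) (parse σ q) := by
  induction σ with
  | nil => exact h
  | cons c σ ih => exact ih.parseStep c

lemma cuts_append (u v : Word) :
    cuts (u ++ v) = cuts u + cuts v ∨ cuts (u ++ v) = cuts u + cuts v + 1 := by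
  have h : LagsBy (cuts v) (∅, 0) (headLetters v, cuts v) := .inl ⟨by simp, by simp⟩
  rcases h.parse u with ⟨hn, -⟩ | ⟨hn, -⟩
  · exact .inl (by rw [cuts, parse_append]; exact hn)
  · exact .inr (by rw [cuts, parse_append]; exact hn)

@[simp] lemma blockCount_nil : blockCount [] = 0 := rfl

lemma blockCount_eq {σ : Word} (h : σ ≠ []) : blockCount σ = cuts σ + 1 := if_neg h

lemma one_le_blockCount {σ : Word} (h : σ ≠ []) : 1 ≤ blockCount σ := by
  simp [blockCount_eq h]

lemma blockCount_append_le (u v : Word) : blockCount (u ++ v) ≤ blockCount u + blockCount v := by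
  rcases eq_or_ne u [] with rfl | hu
  · simp
  rcases eq_or_ne v [] with rfl | hv
  · simp
  rw [blockCount_eq (List.append_ne_nil_of_left_ne_nil hu v), blockCount_eq hu, blockCount_eq hv]
  rcases cuts_append u v with h | h <;> omega

lemma blockCount_add_le_append {u v : Word} (hu : u ≠ []) (hv : v ≠ []) :
    blockCount u + blockCount v ≤ blockCount (u ++ v) + 1 := by
  rw [blockCount_eq (List.append_ne_nil_of_left_ne_nil hu v), blockCount_eq hu, blockCount_eq hv]
  rcases cuts_append u v with h | h <;> omega

lemma blockCount_prefix_le (u v : Word) : blockCount u ≤ blockCount (u ++ v) := by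
  rcases eq_or_ne u [] with rfl | hu
  · simp
  rcases eq_or_ne v [] with rfl | hv
  · simp
  have := blockCount_add_le_append hu hv
  have := one_le_blockCount hv
  omega

lemma blockCount_suffix_le (u v : Word) : blockCount v ≤ blockCount (u ++ v) := by
  rcases eq_or_ne v [] with rfl | hv
  · simp
  rcases eq_or_ne u [] with rfl | hu
  · simp
  have := blockCount_add_le_append hu hv
  have := one_le_blockCount hu
  omega

lemma headLetters_cons (x : Letter) (σ : Word) :
    headLetters (x :: σ) =
      if (insert x (headLetters σ)).card ≤ 2 then insert x (headLetters σ) else {x} := by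
  unfold headLetters parse
  rw [List.foldr_cons, parseStep]
  split_ifs <;> rfl

lemma cuts_cons (x : Letter) (σ : Word) :
    cuts (x :: σ) = cuts σ + if (insert x (headLetters σ)).card ≤ 2 then 0 else 1 := by
  unfold cuts headLetters parse
  rw [List.foldr_cons, parseStep]
  split_ifs <;> rfl

lemma blockCount_cons (x : Letter) {σ : Word} (h : σ ≠ []) :
    blockCount (x :: σ) =
      blockCount σ + if (insert x (headLetters σ)).card ≤ 2 then 0 else 1 := by
  rw [blockCount_eq (List.cons_ne_nil x σ), blockCount_eq h, cuts_cons]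
  omega

lemma headLetters_card_le (σ : Word) : (headLetters σ).card ≤ 2 := by
  cases σ with
  | nil => simp [headLetters, parse]
  | cons x σ =>
    rw [headLetters_cons]
    split_ifs with h
    · exact h
    · simp

lemma headLetters_nonempty {σ : Word} (h : σ ≠ []) : (headLetters σ).Nonempty := by
  obtain ⟨x, σ, rfl⟩ := List.exists_cons_of_ne_nil h
  rw [headLetters_cons]
  split_ifs <;> simp

lemma headLetters_subset_and_cuts_eq_zero {σ : Word} (h : σ.toFinset.card ≤ 2) :
    headLetters σ ⊆ σ.toFinset ∧ cuts σ = 0 := by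
  induction σ with
  | nil => simp [headLetters, cuts, parse]
  | cons x σ ih =>
    rw [List.toFinset_cons] at h ⊢
    obtain ⟨hs, hc⟩ := ih ((Finset.card_le_card (Finset.subset_insert _ _)).trans h)
    have hsub := Finset.insert_subset_insert x hs
    have hfit := (Finset.card_le_card hsub).trans h
    rw [headLetters_cons, cuts_cons, if_pos hfit, if_pos hfit]
    exact ⟨hsub, hc⟩

lemma blockCount_le_one {σ : Word} (h : σ.toFinset.card ≤ 2) : blockCount σ ≤ 1 := by
  rcases eq_or_ne σ [] with rfl | hne
  · simp
  · rw [blockCount_eq hne, (headLetters_subset_and_cuts_eq_zero h).2]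

lemma blockCount_eq_one {σ : Word} (hne : σ ≠ []) (h : σ.toFinset.card ≤ 2) :
    blockCount σ = 1 :=
  (blockCount_le_one h).antisymm (one_le_blockCount hne)

lemma headLetters_eq_toFinset {σ : Word} (h : cuts σ = 0) : headLetters σ = σ.toFinset := by
  induction σ with
  | nil => rfl
  | cons x σ ih =>
    rw [cuts_cons] at h
    by_cases hfit : (insert x (headLetters σ)).card ≤ 2
    · rw [if_pos hfit] at h
      rw [headLetters_cons, if_pos hfit, List.toFinset_cons, ih (by omega)]
    · rw [if_neg hfit] at h
      omega

lemma blockCount_singleton (x : Letter) : blockCount [x] = 1 :=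
  blockCount_eq_one (List.cons_ne_nil x []) (by simp)

lemma blockCount_le_length (σ : Word) : blockCount σ ≤ σ.length := by
  induction σ with
  | nil => simp
  | cons x σ ih =>
    have := blockCount_append_le [x] σ
    rw [blockCount_singleton] at this
    simp only [List.length_cons, List.singleton_append] at this ⊢
    omega

lemma exists_append_block {σ : Word} (hσ : σ ≠ []) :
    ∃ p s : Word, σ = p ++ s ∧ s ≠ [] ∧ s.toFinset.card ≤ 2 ∧ blockCount σ = blockCount p + 1 ∧
      (p ≠ [] → headLetters p = headLetters σ) := by
  induction σ with
  | nil => exact absurd rfl hσ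
  | cons x σ ih =>
    rcases eq_or_ne σ [] with rfl | hσ'
    · exact ⟨[], [x], rfl, by simp, by simp, blockCount_singleton x, by simp⟩
    obtain ⟨p, s, rfl, hs, hsc, hbc, hhead⟩ := ih hσ'
    rw [blockCount_cons x hσ']
    rcases eq_or_ne p [] with rfl | hp
    · simp only [List.nil_append, blockCount_nil, zero_add] at hσ' hbc ⊢
      have hcut : cuts s = 0 := by rw [blockCount_eq hσ'] at hbc; omega
      by_cases hfit : (insert x (headLetters s)).card ≤ 2
      · refine ⟨[], x :: s, rfl, by simp, ?_, by rw [if_pos hfit, hbc]; rfl, by simp⟩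
        rwa [List.toFinset_cons, ← headLetters_eq_toFinset hcut]
      · refine ⟨[x], s, rfl, hs, hsc, ?_, fun _ => ?_⟩
        · rw [if_neg hfit, hbc, blockCount_singleton]
        · rw [headLetters_cons x s, if_neg hfit, headLetters_cons x []]
          simp [headLetters, parse]
    · refine ⟨x :: p, s, rfl, hs, hsc, ?_, fun _ => ?_⟩
      · rw [blockCount_cons x hp, hbc, hhead hp]
        omega
      · rw [headLetters_cons, headLetters_cons, hhead hp]

lemma exists_walk_nil_length_le {t : ℕ} {σ : Word} (ht : σ.length ≤ t) :
    ∃ p : (Gt t).Walk σ [], p.length ≤ blockCount σ := by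
  induction hn : σ.length using Nat.strong_induction_on generalizing σ with
  | _ n ih =>
  rcases eq_or_ne σ [] with rfl | hσ
  · exact ⟨.nil, by simp⟩
  obtain ⟨p, s, rfl, hs, hsc, hbc, -⟩ := exists_append_block hσ
  have hlen : p.length < (p ++ s).length := by simpa using List.length_pos_iff.mpr hs
  have hadj : (Gt t).Adj (p ++ s) p :=
    ⟨ht, hlen.le.trans ht, fun h => hlen.ne' (congrArg List.length h),
      p, s, [], rfl, by simp, .inr (.inl ⟨rfl, hsc⟩)⟩
  obtain ⟨q, hq⟩ := ih p.length (hn ▸ hlen) (hlen.le.trans ht) rfl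
  exact ⟨.cons hadj q, by simp only [Walk.length_cons]; omega⟩

lemma reachable_Gt {t : ℕ} {σ τ : Word} (hσ : σ.length ≤ t) (hτ : τ.length ≤ t) :
    (Gt t).Reachable σ τ := by
  obtain ⟨p, -⟩ := exists_walk_nil_length_le hσ
  obtain ⟨q, -⟩ := exists_walk_nil_length_le hτ
  exact ⟨p.append q.reverse⟩

lemma dW_le_blockCount_add {t : ℕ} {σ τ : Word} (hσ : σ.length ≤ t) (hτ : τ.length ≤ t) :
    dW t σ τ ≤ blockCount σ + blockCount τ := by
  obtain ⟨p, hp⟩ := exists_walk_nil_length_le hσ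
  obtain ⟨q, hq⟩ := exists_walk_nil_length_le hτ
  calc dW t σ τ ≤ (p.append q.reverse).length := dist_le _
    _ ≤ blockCount σ + blockCount τ := by simp only [Walk.length_append, Walk.length_reverse]; omega

lemma _root_.WordAdj.exists_blocks {u v : Word} (h : WordAdj u v) :
    ∃ β X Y : Word, u = β ++ X ∧ v = β ++ Y ∧ X.toFinset.card ≤ 2 ∧ Y.toFinset.card ≤ 2 := by
  have hrep (i j : Letter) (k : ℕ) : (i :: List.replicate k j).toFinset.card ≤ 2 := by
    refine (Finset.card_le_card fun a ha => ?_).trans (Finset.card_le_two (a := i) (b := j))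
    simp only [List.toFinset_cons, Finset.mem_insert, List.mem_toFinset] at ha
    rcases ha with rfl | ha
    · simp
    · simp [List.eq_of_mem_replicate ha]
  obtain ⟨-, β, X, Y, rfl, rfl, (⟨rfl, hY⟩ | ⟨rfl, hX⟩ | ⟨i, j, k, k', -, rfl, rfl⟩)⟩ := h
  · exact ⟨β, [], Y, rfl, rfl, by simp, hY⟩
  · exact ⟨β, X, [], rfl, rfl, hX, by simp⟩
  · exact ⟨β, _, _, rfl, rfl, hrep i j k, hrep j i k'⟩

/-- The `+ 1` on prefixes of `τ` is what makes this potential `1`-Lipschitz along edges. -/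
def prefixPotential (τ x : Word) : ℕ :=
  blockCount (x.drop (commonPrefix x τ).length) + blockCount (τ.drop (commonPrefix x τ).length) +
    if x <+: τ then 1 else 0

lemma prefixPotential_self (τ : Word) : prefixPotential τ τ = 1 := by
  simp [prefixPotential, commonPrefix_self]

lemma prefixPotential_append_append (β τ x : Word) :
    prefixPotential (β ++ τ) (β ++ x) = prefixPotential τ x := by
  simp only [prefixPotential, commonPrefix_append_append, List.length_append,
    List.prefix_append_right_inj, ← List.drop_drop, List.drop_left]

lemma prefixPotential_mem_Icc {τ X : Word} (hX : X.toFinset.card ≤ 2) :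
    blockCount τ ≤ prefixPotential τ X ∧ prefixPotential τ X ≤ blockCount τ + 1 := by
  obtain ⟨X₁, τ₁, hX₁, hτ₁, hdiff⟩ := exists_eq_commonPrefix_append X τ
  set γ := commonPrefix X τ with hγ
  have hγX : γ.toFinset.card ≤ 2 :=
    (card_toFinset_le_of_subset (hX₁ ▸ List.prefix_append γ X₁).subset).trans hX
  have hpot : prefixPotential τ X = blockCount τ₁ + 1 := by
    have hdX : X.drop γ.length = X₁ := by rw [hX₁, List.drop_left]
    have hdτ : τ.drop γ.length = τ₁ := by rw [hτ₁, List.drop_left]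
    rw [prefixPotential, ← hγ, hdX, hdτ]
    rcases eq_or_ne X₁ [] with rfl | hne
    · simp [hX₁, hτ₁]
    · have hnpre : ¬ X <+: τ := by
        rw [hX₁, hτ₁, List.prefix_append_right_inj]
        exact fun h => hne (by rwa [commonPrefix_eq_left h] at hdiff)
      rw [if_neg hnpre, blockCount_eq_one hne
        ((card_toFinset_le_of_subset (hX₁ ▸ List.suffix_append γ X₁).subset).trans hX)]
      omega
  have hτ : blockCount τ ≤ blockCount γ + blockCount τ₁ := hτ₁ ▸ blockCount_append_le γ τ₁
  have := blockCount_le_one hγX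
  have := hτ₁ ▸ blockCount_suffix_le γ τ₁
  omega

lemma prefixPotential_append_of_commonPrefix_eq_nil {β τ : Word} (X : Word) (hβ : β ≠ [])
    (h : commonPrefix β τ = []) :
    prefixPotential τ (β ++ X) = blockCount (β ++ X) + blockCount τ := by
  have h' := commonPrefix_append_eq_nil X hβ h
  have hnpre : ¬ β ++ X <+: τ := fun hp => by
    rw [commonPrefix_eq_left hp] at h'
    exact hβ (List.append_eq_nil_iff.1 h').1
  simp [prefixPotential, h', hnpre]

lemma exists_prefixPotential_append_mem_Icc (τ β : Word) :
    ∃ c, ∀ X : Word, X.toFinset.card ≤ 2 →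
      c ≤ prefixPotential τ (β ++ X) ∧ prefixPotential τ (β ++ X) ≤ c + 1 := by
  obtain ⟨β₁, τ₁, hβ, hτ, hdiff⟩ := exists_eq_commonPrefix_append β τ
  set γ := commonPrefix β τ
  have hred (X : Word) : prefixPotential τ (β ++ X) = prefixPotential τ₁ (β₁ ++ X) := by
    rw [hβ, hτ, List.append_assoc, prefixPotential_append_append]
  rcases eq_or_ne β₁ [] with rfl | hβ₁
  · refine ⟨blockCount τ₁, fun X hX => ?_⟩
    rw [hred, List.nil_append]
    exact prefixPotential_mem_Icc hX
  · refine ⟨blockCount β₁ + blockCount τ₁, fun X hX => ?_⟩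
    rw [hred, prefixPotential_append_of_commonPrefix_eq_nil X hβ₁ hdiff]
    have := blockCount_prefix_le β₁ X
    have := blockCount_append_le β₁ X
    have := blockCount_le_one hX
    omega

lemma prefixPotential_le_of_wordAdj (τ : Word) {u v : Word} (h : WordAdj u v) :
    prefixPotential τ v ≤ prefixPotential τ u + 1 := by
  obtain ⟨β, X, Y, rfl, rfl, hX, hY⟩ := h.exists_blocks
  obtain ⟨c, hc⟩ := exists_prefixPotential_append_mem_Icc τ β
  have := hc X hX
  have := hc Y hY
  omega

lemma prefixPotential_le_length_add_one {t : ℕ} {τ x : Word} (p : (Gt t).Walk x τ) :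
    prefixPotential τ x ≤ p.length + 1 := by
  induction p with
  | nil => simp [prefixPotential_self]
  | @cons a b c h p ih =>
    have := prefixPotential_le_of_wordAdj c h.symm.2.2
    simp only [Walk.length_cons]
    omega

lemma blockCount_le_add_blockCount_drop (σ : Word) (k : ℕ) :
    blockCount σ ≤ k + blockCount (σ.drop k) :=
  calc blockCount σ = blockCount (σ.take k ++ σ.drop k) := by rw [List.take_append_drop]
    _ ≤ blockCount (σ.take k) + blockCount (σ.drop k) := blockCount_append_le _ _
    _ ≤ k + blockCount (σ.drop k) := by
      gcongr
      exact (blockCount_le_length _).trans (List.length_take_le _ _)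

lemma blockCount_add_le_dW {t : ℕ} {σ τ : Word} (hσ : σ.length ≤ t) (hτ : τ.length ≤ t) :
    blockCount σ + blockCount τ ≤ dW t σ τ + 2 * (commonPrefix σ τ).length + 1 := by
  obtain ⟨p, hp⟩ := (reachable_Gt hσ hτ).exists_walk_length_eq_dist
  have hpot := prefixPotential_le_length_add_one p
  rw [hp, prefixPotential] at hpot
  have := blockCount_le_add_blockCount_drop σ (commonPrefix σ τ).length
  have := blockCount_le_add_blockCount_drop τ (commonPrefix σ τ).length
  rw [dW]
  omega

lemma sum_ite_card_insert_le_two {S : Finset Letter} (h₁ : S.Nonempty) (h₂ : #S ≤ 2) :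
    (∑ x : Letter, if #(insert x S) ≤ 2 then 0 else 1) = if #S = 2 then 1 else 0 := by
  revert S
  decide

lemma sum_ite_card_headLetters_eq_two {S : Finset Letter} (h₁ : S.Nonempty) (h₂ : #S ≤ 2) :
    (∑ x : Letter, if #(if #(insert x S) ≤ 2 then insert x S else {x}) = 2 then 1 else 0) = 2 := by
  revert S
  decide

def blockSum (m : ℕ) : ℕ := ∑ v : Fin m → Letter, blockCount (List.ofFn v)

def twoLetterHeadCount (m : ℕ) : ℕ :=
  ∑ v : Fin m → Letter, if #(headLetters (List.ofFn v)) = 2 then 1 else 0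

lemma ofFn_ne_nil {m : ℕ} (hm : 1 ≤ m) (v : Fin m → Letter) : List.ofFn v ≠ [] :=
  List.ne_nil_of_length_pos (by rw [List.length_ofFn]; exact hm)

lemma blockSum_succ {m : ℕ} (hm : 1 ≤ m) :
    blockSum (m + 1) = 3 * blockSum m + twoLetterHeadCount m := by
  simp only [blockSum, twoLetterHeadCount, sum_ofFn_succ,
    blockCount_cons _ (ofFn_ne_nil hm _), sum_add_distrib]
  rw [sum_const, card_univ, Fintype.card_fin, smul_eq_mul, sum_comm]
  congr 1
  exact sum_congr rfl fun v _ =>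
    sum_ite_card_insert_le_two (headLetters_nonempty (ofFn_ne_nil hm v)) (headLetters_card_le _)

lemma twoLetterHeadCount_succ {m : ℕ} (hm : 1 ≤ m) : twoLetterHeadCount (m + 1) = 2 * 3 ^ m := by
  rw [twoLetterHeadCount, sum_ofFn_succ fun σ => if #(headLetters σ) = 2 then 1 else 0]
  simp only [headLetters_cons]
  rw [sum_comm, sum_congr rfl fun v _ => sum_ite_card_headLetters_eq_two
    (headLetters_nonempty (ofFn_ne_nil hm v)) (headLetters_card_le _)]
  simp [mul_comm]

lemma blockSum_add_two (k : ℕ) : blockSum (k + 2) = (2 * k + 9) * 3 ^ k := by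
  induction k with
  | zero =>
    rw [blockSum_succ le_rfl]
    decide
  | succ k ih =>
    rw [blockSum_succ (by omega), ih, twoLetterHeadCount_succ (by omega)]
    ring

lemma sum_range_blockSum (k : ℕ) : ∑ j ∈ range (k + 2), blockSum j = (k + 3) * 3 ^ k := by
  induction k with
  | zero => decide
  | succ k ih =>
    rw [sum_range_succ, ih, blockSum_add_two]
    ring

lemma sum_length_commonPrefix_le (σ : Word) (l : ℕ) :
    2 * ∑ w : Fin l → Letter, (commonPrefix σ (List.ofFn w)).length ≤ 3 ^ l := by
  induction l generalizing σ with
  | zero => simp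
  | succ l ih =>
    rw [sum_ofFn_succ fun τ => (commonPrefix σ τ).length]
    cases σ with
    | nil => simp
    | cons x σ =>
      have hx : ∑ y : Letter, ∑ w : Fin l → Letter,
          (commonPrefix (x :: σ) (y :: List.ofFn w)).length =
          ∑ w : Fin l → Letter, ((commonPrefix σ (List.ofFn w)).length + 1) := by
        simp only [commonPrefix_cons, apply_ite List.length, List.length_cons, List.length_nil]
        simp [sum_ite_eq]
      have := ih σ
      rw [hx, sum_add_distrib]
      simp only [sum_const, card_univ, Fintype.card_fun, Fintype.card_fin, smul_eq_mul, mul_one,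
        pow_succ]
      omega

/-- The vertex set `V_t`, a word of length `k` being given as `⟨k, v⟩` with `v : Fin k → Letter`. -/
def vertices (t : ℕ) : Finset (Σ k, Fin k → Letter) := (range (t + 1)).sigma fun _ => univ

lemma length_le_of_mem_vertices {t : ℕ} {p : Σ k, Fin k → Letter} (hp : p ∈ vertices t) :
    (List.ofFn p.2).length ≤ t := by
  simpa [vertices, Nat.lt_succ_iff] using hp

lemma card_vertices (t : ℕ) : #(vertices t) = ∑ k ∈ range (t + 1), 3 ^ k := by
  simp [vertices]

lemma card_vertices_eq_Nv (t : ℕ) : (#(vertices t) : ℝ) = Nv t := by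
  rw [card_vertices, Nat.cast_sum, Nv]
  push_cast
  rw [geom_sum_eq (by norm_num)]
  norm_num

lemma pairSum_eq_sum_vertices (t : ℕ) :
    pairSum t = ∑ p ∈ vertices t, ∑ q ∈ vertices t, (dW t (List.ofFn p.2) (List.ofFn q.2) : ℝ) := by
  simp only [pairSum, vertices, sum_sigma]
  exact sum_congr rfl fun k _ => sum_comm

lemma two_mul_sum_length_commonPrefix_le (t : ℕ) (σ : Word) :
    2 * ∑ q ∈ vertices t, (commonPrefix σ (List.ofFn q.2)).length ≤ #(vertices t) := by
  rw [card_vertices, vertices, sum_sigma, mul_sum]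
  exact sum_le_sum fun l _ => sum_length_commonPrefix_le σ l

def blockTotal (t : ℕ) : ℕ := ∑ p ∈ vertices t, blockCount (List.ofFn p.2)

lemma blockTotal_succ (k : ℕ) : blockTotal (k + 1) = (k + 3) * 3 ^ k := by
  rw [blockTotal, vertices, sum_sigma, ← sum_range_blockSum]
  rfl

lemma pairSum_le (t : ℕ) : pairSum t ≤ 2 * Nv t * blockTotal t := by
  rw [pairSum_eq_sum_vertices, ← card_vertices_eq_Nv, blockTotal, Nat.cast_sum, ← sum_sum_add_eq]
  refine sum_le_sum fun p hp => sum_le_sum fun q hq => ?_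
  exact_mod_cast dW_le_blockCount_add (length_le_of_mem_vertices hp) (length_le_of_mem_vertices hq)

lemma le_pairSum (t : ℕ) : 2 * Nv t * blockTotal t ≤ pairSum t + 2 * Nv t ^ 2 := by
  set V := vertices t
  have hcp (p : Σ k, Fin k → Letter) :
      2 * ∑ q ∈ V, ((commonPrefix (List.ofFn p.2) (List.ofFn q.2)).length : ℝ) ≤ #V := by
    exact_mod_cast two_mul_sum_length_commonPrefix_le t (List.ofFn p.2)
  calc 2 * Nv t * blockTotal t
      = ∑ p ∈ V, ∑ q ∈ V, ((blockCount (List.ofFn p.2) : ℝ) + blockCount (List.ofFn q.2)) := by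
        rw [sum_sum_add_eq, card_vertices_eq_Nv, blockTotal, Nat.cast_sum]
    _ ≤ ∑ p ∈ V, ∑ q ∈ V, ((dW t (List.ofFn p.2) (List.ofFn q.2) : ℝ) +
          2 * (commonPrefix (List.ofFn p.2) (List.ofFn q.2)).length + 1) := by
        refine sum_le_sum fun p hp => sum_le_sum fun q hq => ?_
        exact_mod_cast blockCount_add_le_dW (length_le_of_mem_vertices hp)
          (length_le_of_mem_vertices hq)
    _ = pairSum t + ∑ p ∈ V, (2 * ∑ q ∈ V,
          ((commonPrefix (List.ofFn p.2) (List.ofFn q.2)).length : ℝ)) + #V * #V := by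
        simp only [sum_add_distrib, pairSum_eq_sum_vertices, mul_sum, sum_const, nsmul_eq_mul]
        ring
    _ ≤ pairSum t + ∑ p ∈ V, (#V : ℝ) + #V * #V := by gcongr with p; exact hcp p
    _ = pairSum t + 2 * Nv t ^ 2 := by
        rw [sum_const, nsmul_eq_mul, card_vertices_eq_Nv]
        ring

lemma abs_Dbar_sub_le {t : ℕ} (ht : 1 ≤ t) : |Dbar t - 4 * t / 9| ≤ 2 := by
  obtain ⟨k, rfl⟩ : ∃ k, t = k + 1 := ⟨t - 1, by omega⟩
  have hU := pairSum_le (k + 1)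
  have hL := le_pairSum (k + 1)
  rw [blockTotal_succ] at hU hL
  push_cast at hU hL ⊢
  have hx : 1 + k * 2 ≤ (3 : ℝ) ^ k := by
    have h := one_add_mul_le_pow (show (-2 : ℝ) ≤ 2 by norm_num) k
    norm_num at h
    exact h
  have hN : Nv (k + 1) = (9 * 3 ^ k - 1) / 2 := by rw [Nv]; ring
  rw [hN] at hU hL
  have hk : (0 : ℝ) ≤ k := k.cast_nonneg
  have hpos : 0 < (9 * 3 ^ k - 1) / 2 * ((9 * 3 ^ k - 1) / 2 - 1 : ℝ) := by nlinarith
  rw [Dbar, hN, abs_sub_le_iff, sub_le_iff_le_add, div_le_iff₀ hpos, sub_le_comm,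
    le_div_iff₀ hpos]
  constructor
  · nlinarith
  · nlinarith

end WordGraph

/-- The average path length of `G_t` satisfies `lim_{t→∞} D̄(t)/t = 4/9`. -/
theorem average_path_length_asymptotics :
    Tendsto (fun t : ℕ => Dbar t / t) atTop (nhds (4 / 9)) := by
  rw [tendsto_iff_norm_sub_tendsto_zero]
  refine squeeze_zero' (.of_forall fun _ => norm_nonneg _) ?_
    (tendsto_const_div_atTop_nhds_zero_nat 2)
  filter_upwards [eventually_ge_atTop 1] with t ht
  have ht' : (t : ℝ) ≠ 0 := by positivity
  have hsub : Dbar t / t - 4 / 9 = (Dbar t - 4 * t / 9) / t := by field_simp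
  rw [hsub, norm_div, Real.norm_natCast, Real.norm_eq_abs]
  exact div_le_div_of_nonneg_right (WordGraph.abs_Dbar_sub_le ht) t.cast_nonneg
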